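/- arXiv:1706.06323 — 2 statements merged into one kernel-verified Lean document; each statement's English description precedes it below -/
import Mathlib

section
/- Let b ≥ 2, a, c, d ∈ Z_b with |a|_b < 1 (i.e., a is a non-unit in each local factor, equivalently a ∈ p·Z_b for every prime p dividing b) and c a unit of Z_b. Then the sequence (a·n² + c·n + d)_{n≥0} is uniformly distributed in Z_b. -/
/-- The ring of `b`-adic integers, modeled as the inverse limit of the rings `ZMod (b^k)`,
realized as a subring of the product ring. -/
def Zb (b : ℕ) : Subring (∀ k : ℕ, ZMod (b ^ k)) where
  carrier := {x | ∀ k, ZMod.castHom (pow_dvd_pow b (Nat.le_succ k)) (ZMod (b ^ k)) (x (k + 1)) = x k}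
  zero_mem' := fun k => map_zero _
  one_mem' := fun k => map_one _
  add_mem' := fun hx hy k => by rw [Pi.add_apply, map_add, hx k, hy k]; rfl
  mul_mem' := fun hx hy k => by rw [Pi.mul_apply, map_mul, hx k, hy k]; rfl
  neg_mem' := fun hx k => by rw [Pi.neg_apply, map_neg, hx k]; rfl

/-- The canonical embedding of the nonnegative integers into the `b`-adic integers. -/
def natToZb (b : ℕ) (n : ℕ) : ↥(Zb b) := ⟨fun k => (n : ZMod (b ^ k)), fun _ => map_natCast _ n⟩

/-- A sequence of `b`-adic integers is uniformly distributed in `Z_b` if for every `k ≥ 1`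
every residue class `a` mod `b^k` has asymptotic frequency `b^{-k}`. -/
def UDZb (b : ℕ) (x : ℕ → ↥(Zb b)) : Prop :=
  ∀ k : ℕ, 1 ≤ k → ∀ a : ZMod (b ^ k),
    Filter.Tendsto
      (fun N => (((Finset.range N).filter (fun n => (x n).1 k = a)).card : ℝ) / N)
      Filter.atTop (nhds (1 / (b : ℝ) ^ k))

/-!
Modulo `b ^ k` the coefficient `a` becomes nilpotent, being divisible by every prime factor of
`b`, while `c` stays a unit. Hence `z ↦ a z² + c z + d` is injective on `ZMod (b ^ k)`: the
difference of two values factors as `(z - w) (a (z + w) + c)`, and a unit plus a nilpotent is a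
unit. An injective self-map of a finite ring is bijective, so the `n` with
`a n² + c n + d ≡ α [mod b ^ k]` form a single residue class mod `b ^ k`, of density `b ^ (-k)`.
-/

open Filter Finset Topology UniqueFactorizationMonoid

theorem tendsto_div_natCast_of_abs_sub_mul_le {f : ℕ → ℝ} {L C : ℝ}
    (h : ∀ N : ℕ, |f N - N * L| ≤ C) :
    Tendsto (fun N : ℕ => f N / N) atTop (𝓝 L) := by
  rw [tendsto_iff_norm_sub_tendsto_zero]
  refine squeeze_zero' (Eventually.of_forall fun _ => norm_nonneg _) ?_
    (tendsto_const_div_atTop_nhds_zero_nat C)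
  filter_upwards [eventually_gt_atTop 0] with N hN
  have hN : (0 : ℝ) < N := Nat.cast_pos.mpr hN
  calc ‖f N / N - L‖ = |f N - N * L| / N := by
        rw [Real.norm_eq_abs, div_sub' hN.ne', abs_div, abs_of_pos hN]
    _ ≤ C / N := by gcongr; exact h N

theorem ZMod.abs_card_filter_natCast_eq_sub_le (m : ℕ) [NeZero m] (z : ZMod m) (N : ℕ) :
    |(#((range N).filter fun n : ℕ => (n : ZMod m) = z) : ℝ) - N * (1 / m)| ≤ 1 := by
  have hm : 0 < m := NeZero.pos m
  have hcard : #((range N).filter fun n : ℕ => (n : ZMod m) = z) =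
      N / m + if z.val % m < N % m then 1 else 0 := by
    rw [← Nat.count_modEq_card _ hm, Nat.count_eq_card_filter_range]
    congr! 2 with n
    rw [← ZMod.natCast_eq_natCast_iff, ZMod.natCast_zmod_val]
  have hdiv : (N : ℝ) * (1 / m) = (N / m : ℕ) + (N % m : ℕ) / m := by
    field_simp
    exact_mod_cast (Nat.div_add_mod N m).symm
  have hmod_lt : ((N % m : ℕ) : ℝ) / m < 1 :=
    (div_lt_one (Nat.cast_pos.mpr hm)).mpr (by exact_mod_cast Nat.mod_lt N hm)
  have hmod_nonneg : 0 ≤ ((N % m : ℕ) : ℝ) / m := by positivity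
  rw [hcard, hdiv, abs_le]
  push_cast
  split_ifs <;> constructor <;> linarith

theorem ZMod.tendsto_card_filter_natCast_eq_div (m : ℕ) [NeZero m] (z : ZMod m) :
    Tendsto (fun N : ℕ => (#((range N).filter fun n : ℕ => (n : ZMod m) = z) : ℝ) / N)
      atTop (𝓝 (1 / m)) :=
  tendsto_div_natCast_of_abs_sub_mul_le (ZMod.abs_card_filter_natCast_eq_sub_le m z)

theorem isNilpotent_of_forall_primeFactors_dvd {R : Type*} [CommRing R] {n : ℕ} (hn : n ≠ 0)
    (hn_nil : IsNilpotent (n : R)) {x : R} (hx : ∀ p ∈ n.primeFactors, (p : R) ∣ x) :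
    IsNilpotent x := by
  have hrad_dvd : ((radical n : ℕ) : R) ∣ x ^ #n.primeFactors := by
    rw [Nat.radical_eq_prod_primeFactors, Nat.cast_prod, ← prod_const]
    exact prod_dvd_prod_of_dvd _ _ hx
  obtain ⟨m, hm⟩ := exists_dvd_radical_self_pow hn
  have hrad_nil : IsNilpotent ((radical n : ℕ) : R) := by
    refine IsNilpotent.of_pow (m := m) ?_
    obtain ⟨y, hy⟩ := Nat.cast_dvd_cast (α := R) hm
    rw [← Nat.cast_pow, hy]
    exact (Commute.all _ _).isNilpotent_mul_right hn_nil
  obtain ⟨y, hy⟩ := hrad_dvd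
  exact IsNilpotent.of_pow (hy ▸ (Commute.all _ _).isNilpotent_mul_right hrad_nil)

theorem injective_quadratic_of_isNilpotent_of_isUnit {R : Type*} [CommRing R] {a c : R}
    (ha : IsNilpotent a) (hc : IsUnit c) (d : R) :
    Function.Injective fun z : R => a * z ^ 2 + c * z + d := by
  intro z w hzw
  have hu : IsUnit (a * (z + w) + c) :=
    ((Commute.all a (z + w)).isNilpotent_mul_right ha).isUnit_add_right_of_commute hc
      (Commute.all _ _)
  have hfactor : (z - w) * (a * (z + w) + c) = 0 := by
    linear_combination hzw
  exact sub_eq_zero.mp (hu.mul_left_eq_zero.mp hfactor)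

namespace Zb

def proj (b k : ℕ) : Zb b →+* ZMod (b ^ k) := (Pi.evalRingHom _ k).comp (Zb b).subtype

@[simp] theorem proj_apply (b k : ℕ) (x : Zb b) : proj b k x = x.1 k := rfl

@[simp] theorem natToZb_apply (b k n : ℕ) : (natToZb b n).1 k = n := rfl

end Zb

/-- if  (i.e.  for every prime ) and  is a unit,
then  is u.d. in . -/
theorem stmt_10 (b : ℕ) (hb : 2 ≤ b) (a c d : ↥(Zb b))
    (ha : ∀ p : ℕ, p.Prime → p ∣ b → ∃ y : ↥(Zb b), a = (p : ↥(Zb b)) * y)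
    (hc : IsUnit c) :
    UDZb b (fun n => a * (natToZb b n) ^ 2 + c * natToZb b n + d) := by
  intro k _ z
  have : NeZero b := ⟨by omega⟩
  set π := Zb.proj b k
  have ha_nil : IsNilpotent (π a) := by
    refine isNilpotent_of_forall_primeFactors_dvd (NeZero.ne b)
      ⟨k, by rw [← Nat.cast_pow, ZMod.natCast_self]⟩ fun p hp => ?_
    obtain ⟨y, rfl⟩ := ha p (Nat.prime_of_mem_primeFactors hp) (Nat.dvd_of_mem_primeFactors hp)
    exact ⟨π y, by simp [π]⟩
  have hinj := injective_quadratic_of_isNilpotent_of_isUnit ha_nil (hc.map π) (π d)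
  obtain ⟨z₀, rfl⟩ := Finite.injective_iff_surjective.mp hinj z
  have hproj (n : ℕ) : (a * natToZb b n ^ 2 + c * natToZb b n + d).1 k =
      π a * (n : ZMod (b ^ k)) ^ 2 + π c * n + π d := by
    simp [π]
  simp_rw [hproj, hinj.eq_iff]
  simpa using ZMod.tendsto_card_filter_natCast_eq_div (b ^ k) z₀
end

section
/- Let q be a prime power, s ≥ 1, t ≥ 0, and let C^(1), ..., C^(s) over F_q be finite-row generating matrices satisfying Condition UD-rank for quality parameter t (i.e., for every m > t and d_1+...+d_s ≤ m - t, the truncations to the first m columns of the rows c_j^(i), 1 ≤ j ≤ d_i, are linearly independent). Then the digital sequence obtained from the index sequence s_n = -n - 1 (using the q-adic digit expansion of the negative integers -n-1) is a (t, s)-sequence in base q. -/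
/-!
For `n` in the block `[k q^m, (k+1) q^m)` the digits of `-n-1` beyond position `m` are those of
`-k q^m - 1`. Hence the `j`-th digit of coordinate `i` of `x_n` is `Λ` applied to `⟪c_j^(i), v⟫`
plus a constant, where `c_j^(i)` is truncated to `m` columns and `v ∈ F_q^m` collects the first
`m` digits of `-n-1` (through `ψ`). The point lies in the elementary interval with numerators `a i`
and exponents `d i` iff the first `d i` digits of each coordinate are those of `a i`, i.e. iff
`M v = y` for the matrix `M` of the rows `c_j^(i)`, `j ≤ d i`, and a fixed `y`. As `n` runs over
the block, `v` runs over `F_q^m` exactly once, and `M` has rank `m - t` by the rank condition, so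
exactly `q^m / q^(m-t) = q^t` indices qualify.
-/

/-- The `r`-th `q`-adic digit of the negative integer `-n-1`: if `a_r` are the base-`q` digits
of `n`, the digits of `-n-1` are `q - 1 - a_r`. -/
def negDigitF (q : ℕ) (hq : 0 < q) (n : ℕ) (r : ℕ) : Fin q :=
  ⟨q - 1 - (n / q ^ r % q), by omega⟩

/-- The `m`-digit truncation `[x_n]_{q,m}` (coordinate `i`) of the point produced by the
digital method from the `q`-adic digits of `s_n = -n-1`, with generating matrices `c`
(rows indexed from `1`) and bijections `ψ r`, `Λ i j`. -/
noncomputable def digPointNegTrunc {F : Type} [Field F] (q : ℕ) (hq : 0 < q) (s : ℕ)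
    (c : Fin s → ℕ → ℕ → F) (ψ : ℕ → Fin q ≃ F) (Λ : Fin s → ℕ → F ≃ Fin q)
    (m : ℕ) (n : ℕ) (i : Fin s) : ℝ :=
  ∑ j ∈ Finset.range m,
    (((Λ i (j + 1)) (∑ᶠ r : ℕ, c i (j + 1) r * ψ r (negDigitF q hq n r)) : Fin q) : ℝ)
      / (q : ℝ) ^ (j + 1)

open Finset Matrix

section Digits

variable {q : ℕ} {b : ℕ → ℕ}

lemma sum_mul_pow_lt_pow (hb : ∀ r, b r < q) (d : ℕ) : ∑ r ∈ range d, b r * q ^ r < q ^ d := by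
  induction d with
  | zero => simp
  | succ d ih =>
    calc ∑ r ∈ range (d + 1), b r * q ^ r < q ^ d + b d * q ^ d := by
          rw [sum_range_succ]; omega
      _ = (b d + 1) * q ^ d := by ring
      _ ≤ q * q ^ d := Nat.mul_le_mul_right _ (hb d)
      _ = q ^ (d + 1) := by ring

lemma sum_mul_pow_div_pow (hb : ∀ r, b r < q) (e n : ℕ) :
    (∑ r ∈ range (e + n), b r * q ^ r) / q ^ e = ∑ r ∈ range n, b (e + r) * q ^ r := by
  have hq : 0 < q := (Nat.zero_le _).trans_lt (hb 0)
  have hhigh : ∑ r ∈ range n, b (e + r) * q ^ (e + r)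
      = q ^ e * ∑ r ∈ range n, b (e + r) * q ^ r := by
    rw [mul_sum]; exact sum_congr rfl fun r _ => by ring
  rw [sum_range_add, hhigh, Nat.add_mul_div_left _ _ (pow_pos hq e),
    Nat.div_eq_of_lt (sum_mul_pow_lt_pow hb e), zero_add]

lemma sum_mul_pow_mod (hb : ∀ r, b r < q) (n : ℕ) :
    (∑ r ∈ range (n + 1), b r * q ^ r) % q = b 0 := by
  have hhigh : ∑ r ∈ range n, b (r + 1) * q ^ (r + 1)
      = q * ∑ r ∈ range n, b (r + 1) * q ^ r := by
    rw [mul_sum]; exact sum_congr rfl fun r _ => by ring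
  rw [sum_range_succ', hhigh, pow_zero, mul_one, Nat.mul_add_mod, Nat.mod_eq_of_lt (hb 0)]

lemma mod_pow_eq_sum_digits (n m : ℕ) : n % q ^ m = ∑ r ∈ range m, n / q ^ r % q * q ^ r := by
  induction m with
  | zero => simp [Nat.mod_one]
  | succ m ih => rw [Nat.mod_pow_succ, ih, sum_range_succ, mul_comm (q ^ m)]

lemma sum_mul_pow_eq_iff (hb : ∀ r, b r < q) {a d : ℕ} (ha : a < q ^ d) :
    ∑ r ∈ range d, b r * q ^ r = a ↔ ∀ r < d, b r = a / q ^ r % q := by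
  constructor
  · rintro rfl r hr
    obtain ⟨n, rfl⟩ := Nat.exists_eq_add_of_lt hr
    rw [add_assoc, sum_mul_pow_div_pow hb, sum_mul_pow_mod fun _ => hb _, add_zero]
  · intro h
    rw [← Nat.mod_eq_of_lt ha, mod_pow_eq_sum_digits]
    exact sum_congr rfl fun r hr => by rw [h r (mem_range.mp hr)]

end Digits

lemma le_and_lt_div_iff_floor_mul_eq {x c : ℝ} (hx : 0 ≤ x) (hc : 0 < c) (a : ℕ) :
    ((a : ℝ) / c ≤ x ∧ x < ((a : ℝ) + 1) / c) ↔ ⌊x * c⌋₊ = a := by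
  rw [Nat.floor_eq_iff (by positivity), div_le_iff₀ hc, lt_div_iff₀ hc]

lemma sum_div_pow_succ_mul_pow {q : ℕ} (hq : 0 < q) (y : ℕ → ℕ) {d m : ℕ} (hd : d ≤ m) :
    (∑ j ∈ range m, (y j : ℝ) / (q : ℝ) ^ (j + 1)) * (q : ℝ) ^ d
      = ((∑ r ∈ range m, y (m - 1 - r) * q ^ r : ℕ) : ℝ) / (q : ℝ) ^ (m - d) := by
  rw [← sum_range_reflect (fun r => y (m - 1 - r) * q ^ r), sum_mul]
  push_cast
  rw [sum_div]
  refine sum_congr rfl fun j hj => ?_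
  have hj := mem_range.mp hj
  rw [show m - 1 - (m - 1 - j) = j by omega]
  have hq' : (0 : ℝ) < q := by exact_mod_cast hq
  field_simp
  rw [mul_assoc, mul_assoc, ← pow_add, ← pow_add, show d + (m - d) = j + 1 + (m - 1 - j) by omega]

lemma le_and_lt_div_pow_iff_digits {q : ℕ} (hq : 0 < q) {y : ℕ → ℕ} (hy : ∀ j, y j < q)
    {a d m : ℕ} (hd : d ≤ m) (ha : a < q ^ d) :
    ((a : ℝ) / (q : ℝ) ^ d ≤ ∑ j ∈ range m, (y j : ℝ) / (q : ℝ) ^ (j + 1)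
      ∧ ∑ j ∈ range m, (y j : ℝ) / (q : ℝ) ^ (j + 1) < ((a : ℝ) + 1) / (q : ℝ) ^ d)
    ↔ ∀ j < d, y j = a / q ^ (d - 1 - j) % q := by
  obtain ⟨e, rfl⟩ := Nat.exists_eq_add_of_le' hd
  have hrev : ∀ r, y (e + d - 1 - r) < q := fun r => hy _
  rw [le_and_lt_div_iff_floor_mul_eq (by positivity) (by positivity),
    sum_div_pow_succ_mul_pow hq y hd, ← Nat.cast_pow, Nat.floor_div_eq_div, Nat.add_sub_cancel,
    sum_mul_pow_div_pow hrev, sum_mul_pow_eq_iff (fun r => hrev _) ha]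
  constructor
  · intro h j hj
    have := h (d - 1 - j) (by omega)
    rwa [show e + d - 1 - (e + (d - 1 - j)) = j by omega] at this
  · intro h r hr
    rw [h _ (by omega), show d - 1 - (e + d - 1 - (e + r)) = r by omega]

lemma finsum_nat_eq_sum_range_add {M : Type*} [AddCommMonoid M] {g : ℕ → M} {R : ℕ}
    (hg : ∀ r, R ≤ r → g r = 0) (m : ℕ) :
    ∑ᶠ r, g r = ∑ r ∈ range m, g r + ∑ᶠ r, g (m + r) := by
  have hlow : ∑ᶠ r, g r = ∑ r ∈ range (m + R), g r :=
    finsum_eq_sum_of_support_subset _ fun r hr => by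
      by_contra h
      exact hr (hg r (by simp only [coe_range, Set.mem_Iio, not_lt] at h; omega))
  have hhigh : ∑ᶠ r, g (m + r) = ∑ r ∈ range R, g (m + r) :=
    finsum_eq_sum_of_support_subset _ fun r hr => by
      by_contra h
      exact hr (hg (m + r) (by simp only [coe_range, Set.mem_Iio, not_lt] at h; omega))
  rw [hlow, hhigh, sum_range_add]

lemma card_filter_comp_of_injOn {α β : Type*} [DecidableEq β] [Fintype β] {s : Finset α}
    {f : α → β} (hf : Set.InjOn f s) (hs : #s = Fintype.card β) (P : β → Prop)
    [DecidablePred P] : #{a ∈ s | P (f a)} = #{b | P b} := by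
  have himage : s.image f = univ := eq_univ_of_card _ (by rw [card_image_of_injOn hf, hs])
  rw [← himage, filter_image, card_image_of_injOn (hf.mono (coe_subset.mpr (filter_subset _ _)))]

lemma card_filter_mulVec_eq_mul {ι κ F : Type*} [Fintype ι] [Fintype κ] [Field F] [Fintype F]
    [DecidableEq ι] [DecidableEq κ] [DecidableEq F] {M : Matrix ι κ F} (hM : LinearIndependent F M)
    (y : ι → F) :
    #{v | M *ᵥ v = y} * Fintype.card F ^ Fintype.card ι = Fintype.card F ^ Fintype.card κ := by
  have hsurj : Function.Surjective M.mulVecLin := by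
    rw [← LinearMap.range_eq_top]
    apply Submodule.eq_top_of_finrank_eq
    rw [Module.finrank_pi]
    exact hM.rank_matrix
  have hfiber : ∀ y', #{v | M *ᵥ v = y'} = #{v | M *ᵥ v = y} := fun y' =>
    AddMonoidHom.card_fiber_eq_of_mem_range M.mulVecLin (hsurj y') (hsurj y)
  calc #{v | M *ᵥ v = y} * Fintype.card F ^ Fintype.card ι
      = ∑ y' : ι → F, #{v | M *ᵥ v = y'} := by
        rw [sum_congr rfl fun y' _ => hfiber y', sum_const, card_univ, Fintype.card_fun,
          smul_eq_mul, mul_comm]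
    _ = Fintype.card F ^ Fintype.card κ := by
        rw [← card_eq_sum_card_fiberwise fun _ _ => mem_univ _, card_univ, Fintype.card_fun]

section NegDigits

variable {q : ℕ} (hq : 0 < q)

lemma div_pow_add_of_mem_Ico {k m n : ℕ} (hn : n ∈ Ico (k * q ^ m) ((k + 1) * q ^ m)) (r : ℕ) :
    n / q ^ (m + r) = k / q ^ r := by
  rw [pow_add, ← Nat.div_div_eq_div_mul, Nat.div_eq_of_lt_le (mem_Ico.1 hn).1 (mem_Ico.1 hn).2]

lemma negDigitF_add_eq_of_mem_Ico {k m n : ℕ} (hn : n ∈ Ico (k * q ^ m) ((k + 1) * q ^ m))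
    (r : ℕ) : negDigitF q hq n (m + r) = negDigitF q hq (k * q ^ m) (m + r) := by
  have hk : k * q ^ m ∈ Ico (k * q ^ m) ((k + 1) * q ^ m) :=
    mem_Ico.2 ⟨le_rfl, Nat.mul_lt_mul_of_pos_right (Nat.lt_succ_self k) (pow_pos hq m)⟩
  ext
  simp only [negDigitF, div_pow_add_of_mem_Ico hn, div_pow_add_of_mem_Ico hk]

lemma negDigitF_injOn (k m : ℕ) :
    Set.InjOn (fun n (r : Fin m) => negDigitF q hq n r) (Ico (k * q ^ m) ((k + 1) * q ^ m)) := by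
  intro n hn n' hn' h
  have hdigit : ∀ r < m, n / q ^ r % q = n' / q ^ r % q := fun r hr => by
    have := congrArg Fin.val (congr_fun h ⟨r, hr⟩)
    simp only [negDigitF] at this
    have := Nat.mod_lt (n / q ^ r) hq
    have := Nat.mod_lt (n' / q ^ r) hq
    omega
  have hmod : n % q ^ m = n' % q ^ m := by
    rw [mod_pow_eq_sum_digits, mod_pow_eq_sum_digits]
    exact sum_congr rfl fun r hr => by rw [hdigit r (mem_range.1 hr)]
  have hn := mem_Ico.1 hn
  have hn' := mem_Ico.1 hn'
  rw [← Nat.div_add_mod n (q ^ m), ← Nat.div_add_mod n' (q ^ m), hmod,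
    Nat.div_eq_of_lt_le hn.1 hn.2, Nat.div_eq_of_lt_le hn'.1 hn'.2]

lemma digPointNegTrunc_mem_iff {F : Type} [Field F] {s : ℕ} (c : Fin s → ℕ → ℕ → F)
    (ψ : ℕ → Fin q ≃ F) (Λ : Fin s → ℕ → F ≃ Fin q) {m d a : ℕ} (hd : d ≤ m) (ha : a < q ^ d)
    (n : ℕ) (i : Fin s) :
    ((a : ℝ) / (q : ℝ) ^ d ≤ digPointNegTrunc q hq s c ψ Λ m n i
      ∧ digPointNegTrunc q hq s c ψ Λ m n i < ((a : ℝ) + 1) / (q : ℝ) ^ d)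
    ↔ ∀ j : Fin d, ∑ᶠ r, c i (j + 1) r * ψ r (negDigitF q hq n r)
      = (Λ i (j + 1)).symm ⟨a / q ^ (d - 1 - j) % q, Nat.mod_lt _ hq⟩ := by
  rw [digPointNegTrunc, le_and_lt_div_pow_iff_digits hq (fun j => Fin.is_lt _) hd ha,
    Fin.forall_iff]
  refine forall₂_congr fun j _ => ?_
  rw [Equiv.eq_symm_apply, Fin.ext_iff]

/-- The digits of `n` beyond the `m`-th are those of `k * q ^ m`, so they only shift the
right-hand side `y`. -/
lemma exists_forall_digPointNegTrunc_mem_iff_mulVec_eq {F : Type} [Field F] {s : ℕ}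
    {c : Fin s → ℕ → ℕ → F} (hfin : ∀ i j, ∃ R : ℕ, ∀ r, R ≤ r → c i j r = 0)
    (ψ : ℕ → Fin q ≃ F) (Λ : Fin s → ℕ → F ≃ Fin q) (k : ℕ) {m : ℕ} {d a : Fin s → ℕ}
    (hdm : ∀ i, d i ≤ m) (ha : ∀ i, a i < q ^ d i) :
    ∃ y : (Σ i : Fin s, Fin (d i)) → F, ∀ n ∈ Ico (k * q ^ m) ((k + 1) * q ^ m),
      (∀ i, (a i : ℝ) / (q : ℝ) ^ d i ≤ digPointNegTrunc q hq s c ψ Λ m n i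
        ∧ digPointNegTrunc q hq s c ψ Λ m n i < ((a i : ℝ) + 1) / (q : ℝ) ^ d i)
      ↔ of (fun (p : Σ i : Fin s, Fin (d i)) (r : Fin m) => c p.1 (p.2 + 1) r)
          *ᵥ (fun r : Fin m => ψ r (negDigitF q hq n r)) = y := by
  refine ⟨fun p => (Λ p.1 (p.2 + 1)).symm ⟨a p.1 / q ^ (d p.1 - 1 - p.2) % q, Nat.mod_lt _ hq⟩
    - ∑ᶠ r, c p.1 (p.2 + 1) (m + r) * ψ (m + r) (negDigitF q hq (k * q ^ m) (m + r)),
    fun n hn => ?_⟩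
  simp only [digPointNegTrunc_mem_iff hq c ψ Λ (hdm _) (ha _), funext_iff, Sigma.forall]
  refine forall₂_congr fun i j => ?_
  obtain ⟨R, hR⟩ := hfin i (j + 1)
  rw [finsum_nat_eq_sum_range_add (fun r hr => by rw [hR r hr, zero_mul]) m, eq_sub_iff_add_eq]
  simp only [negDigitF_add_eq_of_mem_Ico hq hn, mulVec, dotProduct, of_apply,
    Fin.sum_univ_eq_sum_range (fun r => c i (j + 1) r * ψ r (negDigitF q hq n r))]

end NegDigits

open Classical in
theorem stmt_13_general {F : Type} [Field F] [Fintype F] (q : ℕ) (hq : Fintype.card F = q)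
    (hq0 : 0 < q) (s : ℕ) (t : ℕ) (c : Fin s → ℕ → ℕ → F)
    (hfin : ∀ i j, ∃ R : ℕ, ∀ r, R ≤ r → c i j r = 0)
    (hrank : ∀ m : ℕ, t < m → ∀ d : Fin s → ℕ, 1 ≤ ∑ i, d i → ∑ i, d i ≤ m - t →
      LinearIndependent F
        (fun p : Σ i : Fin s, Fin (d i) => fun rr : Fin m => c p.1 (p.2.1 + 1) rr.1))
    (ψ : ℕ → Fin q ≃ F) (Λ : Fin s → ℕ → F ≃ Fin q) :
    ∀ k m : ℕ, t < m → ∀ d : Fin s → ℕ, ∑ i, d i = m - t →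
      ∀ a : Fin s → ℕ, (∀ i, a i < q ^ d i) →
        ((Finset.Ico (k * q ^ m) ((k + 1) * q ^ m)).filter
          (fun n => ∀ i,
            (a i : ℝ) / (q : ℝ) ^ d i ≤ digPointNegTrunc q hq0 s c ψ Λ m n i
              ∧ digPointNegTrunc q hq0 s c ψ Λ m n i < ((a i : ℝ) + 1) / (q : ℝ) ^ d i)).card
          = q ^ t := by
  intro k m hm d hd a ha
  have hdm : ∀ i, d i ≤ m := fun i =>
    (single_le_sum (fun _ _ => Nat.zero_le _) (mem_univ i)).trans (hd.trans_le (Nat.sub_le m t))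
  obtain ⟨y, hy⟩ := exists_forall_digPointNegTrunc_mem_iff_mulVec_eq hq0 hfin ψ Λ k hdm ha
  have hinj : Set.InjOn (fun n (r : Fin m) => ψ r (negDigitF q hq0 n r))
      (Ico (k * q ^ m) ((k + 1) * q ^ m)) := fun n hn n' hn' h =>
    negDigitF_injOn hq0 k m hn hn' (funext fun r => (ψ r).injective (congr_fun h r))
  have hcard : #(Ico (k * q ^ m) ((k + 1) * q ^ m)) = Fintype.card (Fin m → F) := by
    rw [Nat.card_Ico, Fintype.card_fun, Fintype.card_fin, hq, add_mul, one_mul,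
      Nat.add_sub_cancel_left]
  have hcount := card_filter_mulVec_eq_mul (hrank m hm d (by omega) hd.le) y
  simp only [Fintype.card_sigma, Fintype.card_fin, hd, hq] at hcount
  rw [filter_congr hy, card_filter_comp_of_injOn hinj hcard (fun v => _ *ᵥ v = y)]
  refine Nat.eq_of_mul_eq_mul_right (pow_pos hq0 (m - t)) (hcount.trans ?_)
  rw [← pow_add, Nat.add_sub_cancel' hm.le]

open Classical in
/-- if the finite-row generating matrices over `F_q` satisfy the rank condition
for quality parameter `t` (truncations to the first `m` columns of the first `d_i` rows are
linearly independent whenever `1 ≤ d_1+⋯+d_s ≤ m - t`), then the digital sequence obtained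
from the index sequence `s_n = -n-1` is a `(t, s)`-sequence in base `q`: for all `k ≥ 0` and
`m > t`, the `m`-digit truncated points with `k q^m ≤ n < (k+1) q^m` form a `(t, m, s)`-net,
i.e. every elementary interval of volume `q^{t-m}` contains exactly `q^t` of them. -/
theorem stmt_13 {F : Type} [Field F] [Fintype F] (q : ℕ) (hq : Fintype.card F = q)
    (hq0 : 0 < q) (s : ℕ) (hs : 1 ≤ s) (t : ℕ) (c : Fin s → ℕ → ℕ → F)
    (hfin : ∀ i j, ∃ R : ℕ, ∀ r, R ≤ r → c i j r = 0)
    (hrank : ∀ m : ℕ, t < m → ∀ d : Fin s → ℕ, 1 ≤ ∑ i, d i → ∑ i, d i ≤ m - t →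
      LinearIndependent F
        (fun p : Σ i : Fin s, Fin (d i) => fun rr : Fin m => c p.1 (p.2.1 + 1) rr.1))
    (ψ : ℕ → Fin q ≃ F) (Λ : Fin s → ℕ → F ≃ Fin q) :
    ∀ k m : ℕ, t < m → ∀ d : Fin s → ℕ, ∑ i, d i = m - t →
      ∀ a : Fin s → ℕ, (∀ i, a i < q ^ d i) →
        ((Finset.Ico (k * q ^ m) ((k + 1) * q ^ m)).filter
          (fun n => ∀ i,
            (a i : ℝ) / (q : ℝ) ^ d i ≤ digPointNegTrunc q hq0 s c ψ Λ m n i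
              ∧ digPointNegTrunc q hq0 s c ψ Λ m n i < ((a i : ℝ) + 1) / (q : ℝ) ^ d i)).card
          = q ^ t :=
  stmt_13_general q hq hq0 s t c hfin hrank ψ Λ
end
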